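/- There exist constants c > 0, C > 0 and λ₀ > 1 such that for every real λ with 1 < λ < λ₀: c/((λ−1)·log(1/(λ−1))) ≤ ∑_{k=0}^∞ n_k(λ) ≤ exp(C·(log(1/(λ−1)))^{1/2})/(λ−1). -/

import Mathlib

open Real MeasureTheory Set Filter Topology

set_option maxHeartbeats 1000000

namespace NKGrowth

/-- Two-sided cubic Taylor bound for `exp` on `[-1,1]`. -/
lemma exp_cubic_bound {x : ℝ} (hx : |x| ≤ 1) :
    |Real.exp x - (1 + x + x^2/2 + x^3/6)| ≤ 5/96 * x^4 := by
  have h := Real.exp_bound hx (n := 4) (by norm_num)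
  have hs : ∑ m ∈ Finset.range 4, x ^ m / m.factorial = 1 + x + x^2/2 + x^3/6 := by
    norm_num [Finset.sum_range_succ, Nat.factorial]
  rw [hs] at h
  calc |Real.exp x - (1 + x + x^2/2 + x^3/6)| ≤ |x|^4 * (5/(24*4)) := by
        simpa [Nat.factorial] using h
    _ ≤ 5/96 * x^4 := by
        rw [show |x|^4 = x^4 by rw [← abs_pow]; exact abs_of_nonneg (by positivity)]
        ring_nf
        linarith [pow_nonneg (abs_nonneg x) 4]

lemma exp_neg_le_cubic {v : ℝ} (h0 : 0 ≤ v) (h1 : v ≤ 1) :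
    Real.exp (-v) ≤ 1 - v + v^2/2 - v^3/6 + 5/96 * v^4 := by
  have h := exp_cubic_bound (x := -v) (by rw [abs_neg, abs_of_nonneg h0]; exact h1)
  have := (abs_sub_le_iff.1 h).1
  nlinarith [this]

lemma exp_neg_ge_cubic {v : ℝ} (h0 : 0 ≤ v) (h1 : v ≤ 1) :
    1 - v + v^2/2 - v^3/6 - 5/96 * v^4 ≤ Real.exp (-v) := by
  have h := exp_cubic_bound (x := -v) (by rw [abs_neg, abs_of_nonneg h0]; exact h1)
  have := (abs_sub_le_iff.1 h).2
  nlinarith [this]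

lemma exp_pos_le_cubic {v : ℝ} (h0 : 0 ≤ v) (h1 : v ≤ 1) :
    Real.exp v ≤ 1 + v + v^2/2 + v^3/6 + 5/96 * v^4 := by
  have h := exp_cubic_bound (x := v) (by rw [abs_of_nonneg h0]; exact h1)
  have := (abs_sub_le_iff.1 h).1
  nlinarith [this]

lemma exp_pos_ge_cubic {v : ℝ} (h0 : 0 ≤ v) (h1 : v ≤ 1) :
    1 + v + v^2/2 + v^3/6 - 5/96 * v^4 ≤ Real.exp v := by
  have h := exp_cubic_bound (x := v) (by rw [abs_of_nonneg h0]; exact h1)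
  have := (abs_sub_le_iff.1 h).2
  nlinarith [this]



noncomputable def G (t : ℝ) : ℝ := -Real.log (1 - t) / t

noncomputable def K (u : ℝ) : ℝ := u * Real.exp (-u)

lemma K_cont : Continuous K := by
  unfold K; continuity

lemma G_gt_one {t : ℝ} (h0 : 0 < t) (h1 : t < 1) : 1 < G t := by
  rw [G, lt_div_iff₀ h0, one_mul, lt_neg]
  rw [Real.log_lt_iff_lt_exp (by linarith)]
  have := Real.add_one_lt_exp (show -t ≠ 0 by intro h; linarith)
  linarith

lemma G_strictMono {a b : ℝ} (h0 : 0 < a) (hab : a < b) (h1 : b < 1) : G a < G b := by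
  have hb0 : 0 < b := h0.trans hab
  have h1b : (0:ℝ) < 1 - b := by linarith
  have key : (a/b) * Real.log (1-b) + (1 - a/b) * Real.log 1 < Real.log ((a/b)*(1-b) + (1-a/b)*1) := by
    apply strictConcaveOn_log_Ioi.2 (by simp [h1b] : (1-b) ∈ Ioi (0:ℝ)) (by norm_num : (1:ℝ) ∈ Ioi (0:ℝ))
      (by intro h; linarith [h.symm ▸ (rfl : (1:ℝ)-b = 1-b)]) (by positivity) (by rw [sub_pos, div_lt_one hb0]; exact hab) (by ring)
  have h2 : (a/b)*(1-b) + (1-a/b)*1 = 1 - a := by field_simp; ring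
  rw [h2, Real.log_one, mul_zero, add_zero] at key
  rw [G, G, div_lt_div_iff₀ h0 hb0]
  have := mul_lt_mul_of_pos_left key hb0
  have h3 : b * (a / b * Real.log (1 - b)) = a * Real.log (1 - b) := by
    field_simp
  linarith [h3 ▸ this]

lemma K_lt_K_left {a b : ℝ} (h0 : 0 < a) (hab : a < b) (h1 : b ≤ 1) : K a < K b := by
  -- a e^{-a} < b e^{-b}  ⇔  a e^{b-a} < b
  have he : Real.exp (-a) = Real.exp (b - a) * Real.exp (-b) := by
    rw [← Real.exp_add]; ring_nf
  have h1' : (1 - (b - a)) * Real.exp (b - a) < 1 := by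
    have := Real.add_one_lt_exp (show a - b ≠ 0 by intro h; linarith)
    have hep : 0 < Real.exp (b - a) := Real.exp_pos _
    have : (a - b + 1) * Real.exp (b - a) < Real.exp (a - b) * Real.exp (b - a) :=
      mul_lt_mul_of_pos_right this hep
    rw [← Real.exp_add] at this
    simp at this
    nlinarith [this]
  have hep : 0 < Real.exp (b - a) := Real.exp_pos _
  have hbp : 0 < Real.exp (-b) := Real.exp_pos _
  rw [K, K, he, ← mul_assoc]
  apply mul_lt_mul_of_pos_right _ hbp
  -- a * exp (b-a) < b
  nlinarith [h1', hep, mul_pos hep (show (0:ℝ) < b - a by linarith)]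

lemma K_lt_K_right {a b : ℝ} (h0 : 1 ≤ a) (hab : a < b) : K b < K a := by
  have he : Real.exp (-b) = Real.exp (a - b) * Real.exp (-a) := by
    rw [← Real.exp_add]; ring_nf
  have h1' : (1 + (b - a)) * Real.exp (a - b) < 1 := by
    have := Real.add_one_lt_exp (show b - a ≠ 0 by intro h; linarith)
    have hep : 0 < Real.exp (a - b) := Real.exp_pos _
    have : (b - a + 1) * Real.exp (a - b) < Real.exp (b - a) * Real.exp (a - b) :=
      mul_lt_mul_of_pos_right this hep
    rw [← Real.exp_add] at this
    simp at this
    nlinarith [this]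
  have hep : 0 < Real.exp (a - b) := Real.exp_pos _
  have hap : 0 < Real.exp (-a) := Real.exp_pos _
  rw [K, K, he, ← mul_assoc]
  apply mul_lt_mul_of_pos_right _ hap
  nlinarith [h1', hep, mul_pos hep (show (0:ℝ) < b - a by linarith)]

lemma K_le_K_left {a b : ℝ} (h0 : 0 < a) (hab : a ≤ b) (h1 : b ≤ 1) : K a ≤ K b := by
  rcases eq_or_lt_of_le hab with rfl | h
  · exact le_rfl
  · exact (K_lt_K_left h0 h h1).le



noncomputable def fB (θ d : ℝ → ℝ) (x : ℝ) : ℝ := (1 - θ x) / (1 - d x)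

noncomputable def FF (θ d : ℝ → ℝ) (l : ℝ) : ℝ := ∫ x in Set.Ioi l, fB θ d x

lemma exp_half_integrableOn (a : ℝ) :
    MeasureTheory.IntegrableOn (fun x => Real.exp (-(2⁻¹ * x))) (Set.Ioi a) := by
  have := exp_neg_integrableOn_Ioi a (show (0:ℝ) < 2⁻¹ by norm_num)
  simpa [neg_mul] using this

section ThetaD

variable {θ d : ℝ → ℝ}
  (hθ : ∀ x : ℝ, 1 < x → θ x ∈ Set.Ioo (0 : ℝ) 1 ∧ 1 - θ x = Real.exp (-(x * θ x)))
  (hd : ∀ c : ℝ, 1 < c →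
      d c ∈ Set.Ioo (0 : ℝ) 1 ∧ c * Real.exp (-c) = d c * Real.exp (-(d c)))

include hθ in
lemma theta_mem {x : ℝ} (hx : 1 < x) : θ x ∈ Set.Ioo (0:ℝ) 1 := (hθ x hx).1

include hθ in
lemma theta_G {x : ℝ} (hx : 1 < x) : G (θ x) = x := by
  obtain ⟨⟨ht0, ht1⟩, heq⟩ := hθ x hx
  have hlog : Real.log (1 - θ x) = -(x * θ x) := by
    rw [heq, Real.log_exp]
  rw [G, hlog]
  field_simp

include hθ in
lemma theta_le_of {x t : ℝ} (hx : 1 < x) (ht : t ∈ Set.Ioo (0:ℝ) 1) (h : x ≤ G t) :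
    θ x ≤ t := by
  by_contra hlt
  push_neg at hlt
  have := G_strictMono ht.1 hlt (theta_mem hθ hx).2
  rw [theta_G hθ hx] at this
  linarith

include hθ in
lemma le_theta_of {x t : ℝ} (hx : 1 < x) (ht : t ∈ Set.Ioo (0:ℝ) 1) (h : G t ≤ x) :
    t ≤ θ x := by
  by_contra hlt
  push_neg at hlt
  have := G_strictMono (theta_mem hθ hx).1 hlt ht.2
  rw [theta_G hθ hx] at this
  linarith

include hd in
lemma d_mem {x : ℝ} (hx : 1 < x) : d x ∈ Set.Ioo (0:ℝ) 1 := (hd x hx).1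

include hd in
lemma K_d {x : ℝ} (hx : 1 < x) : K (d x) = K x := by
  rw [K, K, (hd x hx).2]

include hd in
lemma d_le_of {x u : ℝ} (hx : 1 < x) (hu : u ∈ Set.Ioo (0:ℝ) 1) (h : K x ≤ K u) :
    d x ≤ u := by
  by_contra hlt
  push_neg at hlt
  have := K_lt_K_left hu.1 hlt (d_mem hd hx).2.le
  rw [K_d hd hx] at this
  linarith

include hd in
lemma le_d_of {x u : ℝ} (hx : 1 < x) (hu : u ∈ Set.Ioo (0:ℝ) 1) (h : K u ≤ K x) :
    u ≤ d x := by
  by_contra hlt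
  push_neg at hlt
  have := K_lt_K_left (d_mem hd hx).1 hlt hu.2.le
  rw [K_d hd hx] at this
  linarith

include hd in
lemma d_anti {x y : ℝ} (hx : 1 < x) (hxy : x ≤ y) : d y ≤ d x := by
  rcases eq_or_lt_of_le hxy with rfl | h
  · exact le_rfl
  · have hy : 1 < y := hx.trans h
    apply d_le_of hd hy (d_mem hd hx)
    calc K y ≤ K x := (K_lt_K_right hx.le h).le
      _ = K (d x) := (K_d hd hx).symm

include hθ in
lemma theta_le_4s {x : ℝ} (hx : 1 < x) (hx2 : x ≤ 1.1) : θ x ≤ 4 * (x - 1) := by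
  obtain ⟨s, rfl⟩ : ∃ s, x = 1 + s := ⟨x - 1, by ring⟩
  have hs0 : 0 < s := by linarith
  have hs1 : s ≤ 1/10 := by norm_num at hx2; linarith
  have h4s : 4 * (1 + s - 1) = 4 * s := by ring
  rw [h4s]
  apply theta_le_of hθ hx (by constructor <;> nlinarith)
  rw [G, le_div_iff₀ (by linarith)]
  have hle : Real.log (1 - 4*s) ≤ -((1+s) * (4*s)) := by
    rw [Real.log_le_iff_le_exp (by nlinarith), show -((1+s)*(4*s)) = -(4*s+4*s^2) by ring]
    have hbd := exp_neg_ge_cubic (v := 4*s + 4*s^2) (by nlinarith) (by nlinarith)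
    have hpoly : (1:ℝ) - 4*s ≤ 1 - (4*s+4*s^2) + (4*s+4*s^2)^2/2 - (4*s+4*s^2)^3/6
        - 5/96*(4*s+4*s^2)^4 := by
      nlinarith [pow_pos hs0 3, pow_pos hs0 4, pow_pos hs0 5, pow_pos hs0 6]
    linarith
  linarith
include hθ in
lemma s_le_theta {x : ℝ} (hx : 1 < x) (hx2 : x ≤ 1.1) : x - 1 ≤ θ x := by
  obtain ⟨s, rfl⟩ : ∃ s, x = 1 + s := ⟨x - 1, by ring⟩
  have hs0 : 0 < s := by linarith
  have hs1 : s ≤ 1/10 := by norm_num at hx2; linarith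
  have h4s : 1 + s - 1 = s := by ring
  rw [h4s]
  apply le_theta_of hθ hx (by constructor <;> nlinarith)
  rw [G, div_le_iff₀ hs0]
  have hle : -((1+s) * s) ≤ Real.log (1 - s) := by
    rw [Real.le_log_iff_exp_le (by nlinarith), show -((1+s)*s) = -(s+s^2) by ring]
    have hbd := exp_neg_le_cubic (v := s + s^2) (by nlinarith) (by nlinarith)
    have hpoly : 1 - (s+s^2) + (s+s^2)^2/2 - (s+s^2)^3/6 + 5/96*(s+s^2)^4 ≤ 1 - s := by
      have h3 : s^3 ≤ s^2/10 := by nlinarith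
      have h4 : s^4 ≤ s^3/10 := by nlinarith
      have h5 : s^5 ≤ s^4/10 := by nlinarith [pow_pos hs0 4]
      have h6 : s^6 ≤ s^5/10 := by nlinarith [pow_pos hs0 5]
      have h7 : s^7 ≤ s^6/10 := by nlinarith [pow_pos hs0 6]
      have h8 : s^8 ≤ s^7/10 := by nlinarith [pow_pos hs0 7]
      nlinarith [pow_pos hs0 3, pow_pos hs0 4, pow_pos hs0 5, pow_pos hs0 6, pow_pos hs0 7,
        pow_pos hs0 8]
    linarith
  linarith

include hθ in
lemma half_le_theta {x : ℝ} (hx : 1.4 ≤ x) : 1/2 ≤ θ x := by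
  have hx1 : 1 < x := by linarith
  apply le_theta_of hθ hx1 (by norm_num)
  have hl2 := Real.log_two_lt_d9
  have : G (1/2) = 2 * Real.log 2 := by
    rw [G, show (1:ℝ) - 1/2 = 2⁻¹ by norm_num, Real.log_inv]
    ring
  rw [this]; linarith

include hθ in
lemma one_sub_theta_le_exp {x : ℝ} (hx : 1.4 ≤ x) : 1 - θ x ≤ Real.exp (-(2⁻¹ * x)) := by
  have hx1 : 1 < x := by linarith
  rw [(hθ x hx1).2]
  apply Real.exp_le_exp.2
  have := half_le_theta hθ hx
  nlinarith

include hd in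
lemma d_upper {x : ℝ} (hx : 1 < x) (hx2 : x ≤ 1.1) : d x ≤ 1 - (x-1) + 2*(x-1)^2 := by
  obtain ⟨s, rfl⟩ : ∃ s, x = 1 + s := ⟨x - 1, by ring⟩
  have hs0 : 0 < s := by linarith
  have hs1 : s ≤ 1/10 := by norm_num at hx2; linarith
  have h4s : 1 - (1 + s - 1) + 2*(1 + s - 1)^2 = 1 - s + 2*s^2 := by ring
  rw [h4s]
  apply d_le_of hd hx (by constructor <;> nlinarith)
  rw [K, K]
  have e1 : Real.exp (-(1+s)) = Real.exp (-1) * Real.exp (-s) := by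
    rw [← Real.exp_add]; ring_nf
  have e2 : Real.exp (-(1-s+2*s^2)) = Real.exp (-1) * Real.exp (s - 2*s^2) := by
    rw [← Real.exp_add]; ring_nf
  rw [e1, e2]
  have hA := exp_neg_le_cubic (v := s) hs0.le (by linarith)
  have hB := exp_pos_ge_cubic (v := s - 2*s^2) (by nlinarith) (by nlinarith)
  have hpoly : (1+s)*(1-s+s^2/2-s^3/6+5/96*s^4) ≤
      (1-s+2*s^2)*(1+(s-2*s^2)+(s-2*s^2)^2/2+(s-2*s^2)^3/6-5/96*(s-2*s^2)^4) := by
    have h3 : s^3 ≤ s^2/10 := by nlinarith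
    have h4 : s^4 ≤ s^3/10 := by nlinarith
    have h5 : s^5 ≤ s^4/10 := by nlinarith [pow_pos hs0 4]
    have h6 : s^6 ≤ s^5/10 := by nlinarith [pow_pos hs0 5]
    have h7 : s^7 ≤ s^6/10 := by nlinarith [pow_pos hs0 6]
    have h8 : s^8 ≤ s^7/10 := by nlinarith [pow_pos hs0 7]
    have h9 : s^9 ≤ s^8/10 := by nlinarith [pow_pos hs0 8]
    have h10 : s^10 ≤ s^9/10 := by nlinarith [pow_pos hs0 9]
    nlinarith [pow_pos hs0 3, pow_pos hs0 4, pow_pos hs0 5, pow_pos hs0 6, pow_pos hs0 7,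
      pow_pos hs0 8, pow_pos hs0 9, pow_pos hs0 10]
  have hexp1 : 0 < Real.exp (-1) := Real.exp_pos _
  have hexpA : 0 ≤ Real.exp (-s) := (Real.exp_pos _).le
  calc (1+s) * (Real.exp (-1) * Real.exp (-s))
      ≤ (1+s) * (Real.exp (-1) * (1-s+s^2/2-s^3/6+5/96*s^4)) := by
        apply mul_le_mul_of_nonneg_left _ (by linarith)
        exact mul_le_mul_of_nonneg_left hA hexp1.le
    _ = Real.exp (-1) * ((1+s)*(1-s+s^2/2-s^3/6+5/96*s^4)) := by ring
    _ ≤ Real.exp (-1) * ((1-s+2*s^2)*(1+(s-2*s^2)+(s-2*s^2)^2/2+(s-2*s^2)^3/6-5/96*(s-2*s^2)^4)) :=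
        mul_le_mul_of_nonneg_left hpoly hexp1.le
    _ ≤ Real.exp (-1) * ((1-s+2*s^2) * Real.exp (s-2*s^2)) := by
        apply mul_le_mul_of_nonneg_left _ hexp1.le
        exact mul_le_mul_of_nonneg_left hB (by nlinarith)
    _ = (1-s+2*s^2) * (Real.exp (-1) * Real.exp (s-2*s^2)) := by ring

include hd in
lemma d_lower {x : ℝ} (hx : 1 < x) (hx2 : x ≤ 1.1) : 1 - (x-1) ≤ d x := by
  obtain ⟨s, rfl⟩ : ∃ s, x = 1 + s := ⟨x - 1, by ring⟩
  have hs0 : 0 < s := by linarith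
  have hs1 : s ≤ 1/10 := by norm_num at hx2; linarith
  have h4s : 1 - (1 + s - 1) = 1 - s := by ring
  rw [h4s]
  apply le_d_of hd hx (by constructor <;> nlinarith)
  rw [K, K]
  have e1 : Real.exp (-(1+s)) = Real.exp (-1) * Real.exp (-s) := by
    rw [← Real.exp_add]; ring_nf
  have e2 : Real.exp (-(1-s)) = Real.exp (-1) * Real.exp s := by
    rw [← Real.exp_add]; ring_nf
  rw [e1, e2]
  have hA := exp_pos_le_cubic (v := s) hs0.le (by linarith)
  have hB := exp_neg_ge_cubic (v := s) hs0.le (by linarith)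
  have hpoly : (1-s)*(1+s+s^2/2+s^3/6+5/96*s^4) ≤ (1+s)*(1-s+s^2/2-s^3/6-5/96*s^4) := by
    nlinarith [pow_pos hs0 3, pow_pos hs0 4, pow_pos hs0 5]
  have hexp1 : 0 < Real.exp (-1) := Real.exp_pos _
  calc (1-s) * (Real.exp (-1) * Real.exp s)
      ≤ (1-s) * (Real.exp (-1) * (1+s+s^2/2+s^3/6+5/96*s^4)) := by
        apply mul_le_mul_of_nonneg_left _ (by linarith)
        exact mul_le_mul_of_nonneg_left hA hexp1.le
    _ = Real.exp (-1) * ((1-s)*(1+s+s^2/2+s^3/6+5/96*s^4)) := by ring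
    _ ≤ Real.exp (-1) * ((1+s)*(1-s+s^2/2-s^3/6-5/96*s^4)) :=
        mul_le_mul_of_nonneg_left hpoly hexp1.le
    _ ≤ Real.exp (-1) * ((1+s) * Real.exp (-s)) := by
        apply mul_le_mul_of_nonneg_left _ hexp1.le
        exact mul_le_mul_of_nonneg_left hB (by nlinarith)
    _ = (1+s) * (Real.exp (-1) * Real.exp (-s)) := by ring

include hd in
lemma one_sub_d_tail {x : ℝ} (hx : 1.1 ≤ x) : 2/25 ≤ 1 - d x := by
  have hx1 : 1 < x := by linarith
  have h1 : d x ≤ d 1.1 := d_anti hd (by norm_num) hx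
  have h2 : d 1.1 ≤ 1 - (1.1-1) + 2*(1.1-1)^2 := d_upper hd (by norm_num) le_rfl
  norm_num at h2
  linarith

include hθ in
lemma theta_contOn : ContinuousOn θ (Set.Ioi 1) := by
  intro x hx
  apply ContinuousAt.continuousWithinAt
  rw [Metric.continuousAt_iff]
  intro ε hε
  obtain ⟨ht0, ht1⟩ := theta_mem hθ hx
  set t0 := θ x with ht0def
  set e := min (ε/2) (min (t0/2) ((1-t0)/2)) with hedef
  have he : 0 < e := by
    apply lt_min (by linarith) (lt_min (by linarith) (by linarith))
  have he1 : e ≤ ε/2 := min_le_left _ _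
  have he2 : e ≤ t0/2 := le_trans (min_le_right _ _) (min_le_left _ _)
  have he3 : e ≤ (1-t0)/2 := le_trans (min_le_right _ _) (min_le_right _ _)
  have hlo : t0 - e ∈ Set.Ioo (0:ℝ) 1 := ⟨by linarith, by linarith⟩
  have hhi : t0 + e ∈ Set.Ioo (0:ℝ) 1 := ⟨by linarith, by linarith⟩
  have ha : G (t0 - e) < x := by
    rw [← theta_G hθ hx]
    exact G_strictMono hlo.1 (by linarith) ht1
  have hb : x < G (t0 + e) := by
    rw [← theta_G hθ hx]
    exact G_strictMono ht0 (by linarith) hhi.2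
  refine ⟨min (x - G (t0 - e)) (G (t0 + e) - x), lt_min (by linarith) (by linarith), ?_⟩
  intro y hy
  rw [Real.dist_eq] at hy ⊢
  have hy1 : G (t0 - e) < y := by
    have := abs_lt.1 (lt_of_lt_of_le hy (min_le_left _ _))
    linarith [this.1]
  have hy2 : y < G (t0 + e) := by
    have := abs_lt.1 (lt_of_lt_of_le hy (min_le_right _ _))
    linarith [this.2]
  have hy1' : 1 < y := (G_gt_one hlo.1 hlo.2).trans hy1
  have h1 : θ y ≤ t0 + e := theta_le_of hθ hy1' hhi hy2.le
  have h2 : t0 - e ≤ θ y := le_theta_of hθ hy1' hlo hy1.le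
  rw [abs_lt]
  constructor <;> linarith

include hd in
lemma d_contOn : ContinuousOn d (Set.Ioi 1) := by
  intro x hx
  apply ContinuousAt.continuousWithinAt
  rw [show ContinuousAt d x ↔ Filter.Tendsto d (𝓝 x) (𝓝 (d x)) from Iff.rfl,
    Metric.tendsto_nhds]
  intro ε hε
  obtain ⟨ht0, ht1⟩ := d_mem hd hx
  set t0 := d x with ht0def
  set e := min (ε/2) (min (t0/2) ((1-t0)/2)) with hedef
  have he : 0 < e := by
    apply lt_min (by linarith) (lt_min (by linarith) (by linarith))
  have he1 : e ≤ ε/2 := min_le_left _ _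
  have he2 : e ≤ t0/2 := le_trans (min_le_right _ _) (min_le_left _ _)
  have he3 : e ≤ (1-t0)/2 := le_trans (min_le_right _ _) (min_le_right _ _)
  have hlo : t0 - e ∈ Set.Ioo (0:ℝ) 1 := ⟨by linarith, by linarith⟩
  have hhi : t0 + e ∈ Set.Ioo (0:ℝ) 1 := ⟨by linarith, by linarith⟩
  have hKx : K x = K t0 := (K_d hd hx).symm
  have hO1 : ∀ᶠ y in 𝓝 x, K y < K (t0 + e) := by
    have hopen : IsOpen {y : ℝ | K y < K (t0 + e)} := isOpen_lt K_cont continuous_const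
    apply hopen.eventually_mem
    show K x < K (t0 + e)
    rw [hKx]
    exact K_lt_K_left ht0 (by linarith) hhi.2.le
  have hO2 : ∀ᶠ y in 𝓝 x, K (t0 - e) < K y := by
    have hopen : IsOpen {y : ℝ | K (t0 - e) < K y} := isOpen_lt continuous_const K_cont
    apply hopen.eventually_mem
    show K (t0 - e) < K x
    rw [hKx]
    exact K_lt_K_left hlo.1 (by linarith) ht1.le
  have hO3 : ∀ᶠ y in 𝓝 x, 1 < y := isOpen_Ioi.eventually_mem hx
  filter_upwards [hO1, hO2, hO3] with y h1 h2 h3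
  have hu : d y ≤ t0 + e := d_le_of hd h3 hhi h1.le
  have hl : t0 - e ≤ d y := le_d_of hd h3 hlo h2.le
  rw [Real.dist_eq, abs_lt]
  constructor <;> linarith

include hθ hd in
lemma fB_nonneg {x : ℝ} (hx : 1 < x) : 0 ≤ fB θ d x := by
  have h1 := (theta_mem hθ hx).2
  have h2 := (d_mem hd hx).2
  apply div_nonneg <;> linarith

include hθ hd in
lemma fB_contOn : ContinuousOn (fB θ d) (Set.Ioi 1) := by
  apply ContinuousOn.div (continuousOn_const.sub (theta_contOn hθ))
    (continuousOn_const.sub (d_contOn hd))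
  intro x hx
  have := (d_mem hd hx).2
  intro h
  simp only [Pi.sub_apply, sub_eq_zero] at h
  linarith

include hθ hd in
lemma fB_le_one_div {x : ℝ} (hx : 1 < x) (hx2 : x ≤ 1.1) :
    fB θ d x ≤ 1/(x-1) + 2 := by
  have hs0 : 0 < x - 1 := by linarith
  have hs1 : x - 1 ≤ 1/10 := by norm_num at hx2 ⊢; linarith
  have hnum : 1 - θ x ≤ 1 - (x-1) := by linarith [s_le_theta hθ hx hx2]
  have hden : (x-1) - 2*(x-1)^2 ≤ 1 - d x := by linarith [d_upper hd hx hx2]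
  have hdenpos : 0 < (x-1) - 2*(x-1)^2 := by nlinarith
  calc fB θ d x ≤ (1 - (x-1)) / ((x-1) - 2*(x-1)^2) :=
      div_le_div₀ (by linarith) hnum hdenpos hden
    _ ≤ 1/(x-1) + 2 := by
      rw [div_le_iff₀ hdenpos]
      have : (1/(x-1) + 2) * ((x-1) - 2*(x-1)^2)
          = (1 - 2*(x-1)) * (1 + 2*(x-1)) := by field_simp
      rw [this]; nlinarith

include hθ hd in
lemma fB_ge_one_div {x : ℝ} (hx : 1 < x) (hx2 : x ≤ 1.1) :
    1/(x-1) - 4 ≤ fB θ d x := by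
  have hs0 : 0 < x - 1 := by linarith
  have hs1 : x - 1 ≤ 1/10 := by norm_num at hx2 ⊢; linarith
  have hnum : 1 - 4*(x-1) ≤ 1 - θ x := by linarith [theta_le_4s hθ hx hx2]
  have hden : 1 - d x ≤ x - 1 := by linarith [d_lower hd hx hx2]
  have hdpos : 0 < 1 - d x := by linarith [(d_mem hd hx).2]
  calc 1/(x-1) - 4 = (1 - 4*(x-1))/(x-1) := by field_simp
    _ ≤ fB θ d x := div_le_div₀ (by linarith [(theta_mem hθ hx).2]) hnum hdpos hden

include hθ hd in
lemma fB_le_tail1 {x : ℝ} (hx : 1.1 ≤ x) : fB θ d x ≤ 25/2 := by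
  have hx1 : 1 < x := by linarith
  have hnum : 1 - θ x ≤ 1 := by linarith [(theta_mem hθ hx1).1]
  have hden : 2/25 ≤ 1 - d x := one_sub_d_tail hd hx
  calc fB θ d x ≤ 1 / (2/25) := div_le_div₀ (by norm_num) hnum (by norm_num) hden
    _ = 25/2 := by norm_num

include hθ hd in
lemma fB_le_tail2 {x : ℝ} (hx : 1.4 ≤ x) : fB θ d x ≤ 25/2 * Real.exp (-(2⁻¹ * x)) := by
  have hx1 : 1 < x := by linarith
  have hnum : 1 - θ x ≤ Real.exp (-(2⁻¹ * x)) := one_sub_theta_le_exp hθ hx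
  have hden : 2/25 ≤ 1 - d x := one_sub_d_tail hd (by linarith)
  calc fB θ d x ≤ Real.exp (-(2⁻¹ * x)) / (2/25) :=
      div_le_div₀ (Real.exp_pos _).le hnum (by norm_num) hden
    _ = 25/2 * Real.exp (-(2⁻¹ * x)) := by ring

include hθ hd in
lemma fB_integrableOn {l : ℝ} (hl : 1 < l) :
    MeasureTheory.IntegrableOn (fB θ d) (Set.Ioi l) := by
  set c := max l 1.4 with hc
  have hlc : l ≤ c := le_max_left _ _
  have hc14 : (1.4:ℝ) ≤ c := le_max_right _ _
  have hc1 : 1 < c := by linarith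
  have h1 : MeasureTheory.IntegrableOn (fB θ d) (Set.Ioc l c) := by
    apply MeasureTheory.IntegrableOn.mono_set _ Set.Ioc_subset_Icc_self
    apply ContinuousOn.integrableOn_Icc
    apply (fB_contOn hθ hd).mono
    intro x hx
    exact lt_of_lt_of_le hl hx.1
  have h2 : MeasureTheory.IntegrableOn (fB θ d) (Set.Ioi c) := by
    apply MeasureTheory.Integrable.mono' ((exp_half_integrableOn c).const_mul (25/2))
    · exact ((fB_contOn hθ hd).mono (fun x hx => lt_trans hc1 hx)).aestronglyMeasurable
        measurableSet_Ioi
    · rw [MeasureTheory.ae_restrict_iff' measurableSet_Ioi]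
      filter_upwards with x hx
      have hx1 : 1 < x := lt_trans hc1 hx
      rw [Real.norm_eq_abs, abs_of_nonneg (fB_nonneg hθ hd hx1)]
      exact fB_le_tail2 hθ hd (le_trans hc14 hx.le)
  have := MeasureTheory.IntegrableOn.union h1 h2
  rwa [Set.Ioc_union_Ioi_eq_Ioi hlc] at this

include hθ hd in
lemma FF_nonneg {l : ℝ} (hl : 1 ≤ l) : 0 ≤ FF θ d l := by
  apply MeasureTheory.setIntegral_nonneg measurableSet_Ioi
  exact fun x hx => fB_nonneg hθ hd (lt_of_le_of_lt hl hx)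

include hθ hd in
lemma FF_split {a b : ℝ} (ha : 1 < a) (hab : a ≤ b) :
    FF θ d a = (∫ x in Set.Ioc a b, fB θ d x) + FF θ d b := by
  have hb : 1 < b := lt_of_lt_of_le ha hab
  rw [FF, ← Set.Ioc_union_Ioi_eq_Ioi hab,
    MeasureTheory.setIntegral_union (Set.Ioc_disjoint_Ioi le_rfl) measurableSet_Ioi
      ((fB_integrableOn hθ hd ha).mono_set Set.Ioc_subset_Ioi_self) (fB_integrableOn hθ hd hb)]
  rfl

include hθ hd in
lemma FF_anti {a b : ℝ} (ha : 1 < a) (hab : a ≤ b) : FF θ d b ≤ FF θ d a := by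
  rw [FF_split hθ hd ha hab]
  have : 0 ≤ ∫ x in Set.Ioc a b, fB θ d x := by
    apply MeasureTheory.setIntegral_nonneg measurableSet_Ioc
    exact fun x hx => fB_nonneg hθ hd (lt_of_lt_of_le ha hx.1.le)
  linarith

lemma integral_exp_half_Ioi (u : ℝ) :
    ∫ x in Set.Ioi u, Real.exp (-(2⁻¹ * x)) = 2 * Real.exp (-(2⁻¹ * u)) := by
  have hderiv : ∀ x ∈ Set.Ioi u,
      HasDerivAt (fun y => -2 * Real.exp (-(2⁻¹ * y))) (Real.exp (-(2⁻¹ * x))) x := by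
    intro x _
    have h1 : HasDerivAt (fun y : ℝ => -(2⁻¹ * y)) (-(2⁻¹)) x := by
      simpa using ((hasDerivAt_id x).const_mul (2⁻¹ : ℝ)).fun_neg
    have h2 := (h1.exp).const_mul (-2 : ℝ)
    exact h2.congr_deriv (by ring)
  have htends : Filter.Tendsto (fun y => -2 * Real.exp (-(2⁻¹ * y))) Filter.atTop (𝓝 0) := by
    have h1 : Filter.Tendsto (fun y : ℝ => -(2⁻¹ * y)) Filter.atTop Filter.atBot := by
      apply Filter.Tendsto.comp tendsto_neg_atTop_atBot
      exact (Filter.tendsto_id.const_mul_atTop (by norm_num : (0:ℝ) < 2⁻¹))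
    have h2 := (Real.tendsto_exp_atBot.comp h1).const_mul (-2 : ℝ)
    simpa using h2
  have hcont : Continuous fun y : ℝ => -2 * Real.exp (-(2⁻¹ * y)) :=
    continuous_const.mul (Real.continuous_exp.comp ((continuous_const.mul continuous_id).neg))
  have := MeasureTheory.integral_Ioi_of_hasDerivAt_of_tendsto
    hcont.continuousWithinAt hderiv (exp_half_integrableOn u) htends
  rw [this]
  ring

include hθ hd in
lemma FF_tail {u : ℝ} (hu : 1.4 ≤ u) : FF θ d u ≤ 25 * Real.exp (-(2⁻¹ * u)) := by
  have hu1 : 1 < u := by linarith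
  have hle : FF θ d u ≤ ∫ x in Set.Ioi u, 25/2 * Real.exp (-(2⁻¹ * x)) := by
    apply MeasureTheory.setIntegral_mono_on (fB_integrableOn hθ hd hu1)
      ((exp_half_integrableOn u).const_mul (25/2)) measurableSet_Ioi
    exact fun x hx => fB_le_tail2 hθ hd (le_trans hu hx.le)
  rw [MeasureTheory.integral_const_mul, integral_exp_half_Ioi] at hle
  linarith

include hθ hd in
lemma FF_tendsto : Filter.Tendsto (FF θ d) Filter.atTop (𝓝 0) := by
  apply squeeze_zero' (g := fun u => 25 * Real.exp (-(2⁻¹ * u)))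
  · filter_upwards [Filter.eventually_ge_atTop (1.4:ℝ)] with u hu
    exact FF_nonneg hθ hd (by linarith)
  · filter_upwards [Filter.eventually_ge_atTop (1.4:ℝ)] with u hu
    exact FF_tail hθ hd hu
  · have h1 : Filter.Tendsto (fun y : ℝ => -(2⁻¹ * y)) Filter.atTop Filter.atBot := by
      apply Filter.Tendsto.comp tendsto_neg_atTop_atBot
      exact (Filter.tendsto_id.const_mul_atTop (by norm_num : (0:ℝ) < 2⁻¹))
    have h2 := (Real.tendsto_exp_atBot.comp h1).const_mul (25 : ℝ)
    simpa using h2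

include hθ hd in
lemma FF_hasDerivAt {x : ℝ} (hx : 1 < x) :
    HasDerivAt (FF θ d) (-(fB θ d x)) x := by
  set c := (1 + x)/2 with hc
  have hc1 : 1 < c := by rw [hc]; linarith
  have hcx : c < x := by rw [hc]; linarith
  have hInt : IntervalIntegrable (fB θ d) MeasureTheory.volume c x := by
    rw [intervalIntegrable_iff_integrableOn_Ioc_of_le hcx.le]
    exact (fB_integrableOn hθ hd hc1).mono_set Set.Ioc_subset_Ioi_self
  have hMeas : StronglyMeasurableAtFilter (fB θ d) (𝓝 x) :=
    ⟨Set.Ioi 1, Ioi_mem_nhds hx, (fB_contOn hθ hd).aestronglyMeasurable measurableSet_Ioi⟩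
  have hCont : ContinuousAt (fB θ d) x :=
    (fB_contOn hθ hd).continuousAt (Ioi_mem_nhds hx)
  have h0 := intervalIntegral.integral_hasDerivAt_right hInt hMeas hCont
  have hD := h0.const_sub (FF θ d c)
  apply hD.congr_of_eventuallyEq
  filter_upwards [Ioi_mem_nhds hcx] with u hu
  rw [intervalIntegral.integral_of_le (le_of_lt hu)]
  have := FF_split hθ hd hc1 (le_of_lt hu)
  linarith

include hθ hd in
lemma n_eq {n : ℕ → ℝ → ℝ} (hn0 : ∀ l : ℝ, n 0 l = 1)
    (hnsucc : ∀ k : ℕ, ∀ l : ℝ, 1 < l →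
      n (k + 1) l = ∫ x in Set.Ioi l, ((1 - θ x) / (1 - d x)) * n k x)
    (k : ℕ) : ∀ l : ℝ, 1 < l → n k l = FF θ d l ^ k / (Nat.factorial k : ℝ) := by
  induction k with
  | zero => intro l _; simp [hn0]
  | succ k ih =>
    intro l hl
    rw [hnsucc k l hl]
    have hcong : (∫ x in Set.Ioi l, ((1 - θ x) / (1 - d x)) * n k x)
        = ∫ x in Set.Ioi l, fB θ d x * (FF θ d x ^ k / (Nat.factorial k : ℝ)) := by
      apply MeasureTheory.setIntegral_congr_fun measurableSet_Ioi
      intro x hx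
      have := ih x (lt_trans hl hx)
      simp only [fB, this]
    rw [hcong]
    have hcontFF : ContinuousOn (FF θ d) (Set.Ioi 1) := fun x hx =>
      (FF_hasDerivAt hθ hd hx).continuousAt.continuousWithinAt
    have hfac : (0:ℝ) < (Nat.factorial k : ℝ) := by positivity
    have hint : MeasureTheory.IntegrableOn
        (fun x => fB θ d x * (FF θ d x ^ k / (Nat.factorial k : ℝ))) (Set.Ioi l) := by
      apply MeasureTheory.Integrable.mono'
        ((fB_integrableOn hθ hd hl).const_mul (FF θ d l ^ k / (Nat.factorial k : ℝ)))
      · apply ContinuousOn.aestronglyMeasurable _ measurableSet_Ioi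
        apply ContinuousOn.mul ((fB_contOn hθ hd).mono (fun x hx => lt_trans hl hx))
        apply ContinuousOn.div_const
        exact (hcontFF.mono (fun x hx => lt_trans hl hx)).pow k
      · rw [MeasureTheory.ae_restrict_iff' measurableSet_Ioi]
        filter_upwards with x hx
        have hx1 : 1 < x := lt_trans hl hx
        have hf0 := fB_nonneg hθ hd hx1
        have hF0 := FF_nonneg hθ hd hx1.le
        have hFle : FF θ d x ≤ FF θ d l := FF_anti hθ hd hl hx.le
        rw [Real.norm_eq_abs, abs_of_nonneg (by positivity)]
        calc fB θ d x * (FF θ d x ^ k / (Nat.factorial k : ℝ))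
            ≤ fB θ d x * (FF θ d l ^ k / (Nat.factorial k : ℝ)) := by gcongr
          _ = FF θ d l ^ k / (Nat.factorial k : ℝ) * fB θ d x := by ring
    have hderiv : ∀ x ∈ Set.Ioi l, HasDerivAt
        (fun u => -(FF θ d u ^ (k+1) / (Nat.factorial (k+1) : ℝ)))
        (fB θ d x * (FF θ d x ^ k / (Nat.factorial k : ℝ))) x := by
      intro x hx
      have h1 := ((FF_hasDerivAt hθ hd (lt_trans hl hx)).pow (k+1)).div_const
        ((Nat.factorial (k+1) : ℝ))
      have h2 := h1.neg
      refine h2.congr_deriv ?_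
      symm
      rw [Nat.add_sub_cancel]
      have hfs : (Nat.factorial (k+1) : ℝ) = ((k:ℝ)+1) * (Nat.factorial k : ℝ) := by
        rw [Nat.factorial_succ]; push_cast; ring
      rw [hfs]
      field_simp
      push_cast
      ring
    have htend : Filter.Tendsto (fun u => -(FF θ d u ^ (k+1) / (Nat.factorial (k+1) : ℝ)))
        Filter.atTop (𝓝 0) := by
      have := (((FF_tendsto hθ hd).pow (k+1)).div_const ((Nat.factorial (k+1) : ℝ))).neg
      simpa using this
    have hcont : ContinuousWithinAt
        (fun u => -(FF θ d u ^ (k+1) / (Nat.factorial (k+1) : ℝ))) (Set.Ici l) l := by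
      apply ContinuousAt.continuousWithinAt
      exact (((FF_hasDerivAt hθ hd hl).continuousAt.pow (k+1)).div_const _).neg
    have hres := MeasureTheory.integral_Ioi_of_hasDerivAt_of_tendsto hcont hderiv hint htend
    rw [hres, zero_sub, neg_neg]

include hθ hd in
lemma n_tsum {n : ℕ → ℝ → ℝ} (hn0 : ∀ l : ℝ, n 0 l = 1)
    (hnsucc : ∀ k : ℕ, ∀ l : ℝ, 1 < l →
      n (k + 1) l = ∫ x in Set.Ioi l, ((1 - θ x) / (1 - d x)) * n k x)
    {l : ℝ} (hl : 1 < l) : ∑' k : ℕ, n k l = Real.exp (FF θ d l) := by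
  have h := n_eq hθ hd hn0 hnsucc
  calc ∑' k : ℕ, n k l = ∑' k : ℕ, FF θ d l ^ k / (Nat.factorial k : ℝ) :=
      tsum_congr (fun k => h k l hl)
    _ = Real.exp (FF θ d l) := by
      rw [Real.exp_eq_exp_ℝ, NormedSpace.exp_eq_tsum_div]

lemma integral_one_div_shift {a b : ℝ} (ha : 1 < a) (hab : a ≤ b) :
    ∫ x in a..b, 1/(x-1) = Real.log ((b-1)/(a-1)) := by
  have h := intervalIntegral.integral_comp_sub_right (a := a) (b := b) (fun y => 1/y) 1
  rw [h, integral_one_div]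
  intro hmem
  rw [Set.mem_uIcc] at hmem
  rcases hmem with ⟨h1, _⟩ | ⟨_, h2⟩ <;> linarith

include hθ hd in
lemma FF_upper {l : ℝ} (hl : 1 < l) (hl2 : l ≤ 17/16) :
    FF θ d l ≤ -Real.log (l-1) + 29 := by
  have hl11 : l ≤ 1.1 := by norm_num at hl2 ⊢; linarith
  have hsplit := FF_split hθ hd hl hl11
  have hFF14 : FF θ d 1.4 ≤ 25 := by
    have h := FF_tail hθ hd (le_refl 1.4)
    have hexp : Real.exp (-(2⁻¹ * 1.4)) ≤ 1 := by
      rw [Real.exp_le_one_iff]; norm_num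
    nlinarith [h, hexp]
  have hmid : (∫ x in Set.Ioc (1.1:ℝ) 1.4, fB θ d x) ≤ 25/2 * 0.3 := by
    have hgi : MeasureTheory.IntegrableOn (fun _ : ℝ => (25/2 : ℝ)) (Set.Ioc (1.1:ℝ) 1.4) :=
      MeasureTheory.integrableOn_const (by rw [Real.volume_Ioc]; exact ENNReal.ofReal_ne_top)
    have h := MeasureTheory.setIntegral_mono_on
      ((fB_integrableOn hθ hd (by norm_num)).mono_set Set.Ioc_subset_Ioi_self) hgi
      measurableSet_Ioc (fun x hx => fB_le_tail1 hθ hd hx.1.le)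
    rw [MeasureTheory.setIntegral_const, Real.volume_real_Ioc_of_le (by norm_num), smul_eq_mul] at h
    calc (∫ x in Set.Ioc (1.1:ℝ) 1.4, fB θ d x) ≤ (1.4 - 1.1) * (25/2) := h
      _ = 25/2 * 0.3 := by norm_num
  have hsplit2 := FF_split hθ hd (show (1:ℝ) < 1.1 by norm_num) (show (1.1:ℝ) ≤ 1.4 by norm_num)
  have hFF11 : FF θ d 1.1 ≤ 28.75 := by
    rw [hsplit2]; norm_num at hmid ⊢; linarith
  have hgcont : ContinuousOn (fun x : ℝ => 1/(x-1) + 2) (Set.Icc l 1.1) := by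
    apply ContinuousOn.add _ continuousOn_const
    apply ContinuousOn.div continuousOn_const (by fun_prop)
    intro x hx
    have : 1 < x := lt_of_lt_of_le hl hx.1
    intro hc; rw [sub_eq_zero] at hc; linarith
  have hmain : (∫ x in Set.Ioc l 1.1, fB θ d x)
      ≤ Real.log ((1.1-1)/(l-1)) + 2*(1.1-l) := by
    have hgint : MeasureTheory.IntegrableOn (fun x : ℝ => 1/(x-1) + 2) (Set.Ioc l 1.1) :=
      hgcont.integrableOn_Icc.mono_set Set.Ioc_subset_Icc_self
    have h1 := MeasureTheory.setIntegral_mono_on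
      ((fB_integrableOn hθ hd hl).mono_set Set.Ioc_subset_Ioi_self) hgint measurableSet_Ioc
      (fun x hx => fB_le_one_div hθ hd (lt_of_lt_of_le hl hx.1.le) hx.2)
    have hint1 : IntervalIntegrable (fun x : ℝ => 1/(x-1)) MeasureTheory.volume l 1.1 := by
      apply ContinuousOn.intervalIntegrable
      rw [Set.uIcc_of_le hl11]
      apply ContinuousOn.div continuousOn_const (by fun_prop)
      intro x hx
      have : 1 < x := lt_of_lt_of_le hl hx.1
      intro hc; rw [sub_eq_zero] at hc; linarith
    have hint2 : IntervalIntegrable (fun _ : ℝ => (2:ℝ)) MeasureTheory.volume l 1.1 :=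
      intervalIntegrable_const
    have h2 : (∫ x in Set.Ioc l (1.1:ℝ), (1/(x-1) + 2))
        = Real.log ((1.1-1)/(l-1)) + 2*(1.1-l) := by
      rw [← intervalIntegral.integral_of_le hl11,
        intervalIntegral.integral_add hint1 hint2,
        integral_one_div_shift hl hl11, intervalIntegral.integral_const, smul_eq_mul]
      ring
    calc (∫ x in Set.Ioc l 1.1, fB θ d x) ≤ ∫ x in Set.Ioc l (1.1:ℝ), (1/(x-1) + 2) := h1
      _ = Real.log ((1.1-1)/(l-1)) + 2*(1.1-l) := h2
  have hlog : Real.log ((1.1-1)/(l-1)) = Real.log 0.1 - Real.log (l-1) := by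
    rw [show ((1.1:ℝ)-1) = 0.1 by norm_num, Real.log_div (by norm_num) (by intro h; nlinarith [h])]
  have hlog01 : Real.log 0.1 ≤ 0 := Real.log_nonpos (by norm_num) (by norm_num)
  rw [hsplit]
  rw [hlog] at hmain
  have : 2*(1.1 - l) ≤ 0.2 := by norm_num; linarith
  norm_num at *
  linarith

include hθ hd in
lemma FF_lower {l : ℝ} (hl : 1 < l) (hl2 : l ≤ 17/16) :
    -Real.log (l-1) - 10 ≤ FF θ d l := by
  have hl11 : l ≤ 1.1 := by norm_num at hl2 ⊢; linarith
  have hsplit := FF_split hθ hd hl hl11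
  have hFF11 : 0 ≤ FF θ d 1.1 := FF_nonneg hθ hd (by norm_num)
  have hgcont : ContinuousOn (fun x : ℝ => 1/(x-1) - 4) (Set.Icc l 1.1) := by
    apply ContinuousOn.sub _ continuousOn_const
    apply ContinuousOn.div continuousOn_const (by fun_prop)
    intro x hx
    have : 1 < x := lt_of_lt_of_le hl hx.1
    intro hc; rw [sub_eq_zero] at hc; linarith
  have hmain : Real.log ((1.1-1)/(l-1)) - 4*(1.1-l) ≤ (∫ x in Set.Ioc l 1.1, fB θ d x) := by
    have hgint : MeasureTheory.IntegrableOn (fun x : ℝ => 1/(x-1) - 4) (Set.Ioc l 1.1) :=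
      hgcont.integrableOn_Icc.mono_set Set.Ioc_subset_Icc_self
    have h1 := MeasureTheory.setIntegral_mono_on hgint
      ((fB_integrableOn hθ hd hl).mono_set Set.Ioc_subset_Ioi_self) measurableSet_Ioc
      (fun x hx => fB_ge_one_div hθ hd (lt_of_lt_of_le hl hx.1.le) hx.2)
    have hint1 : IntervalIntegrable (fun x : ℝ => 1/(x-1)) MeasureTheory.volume l 1.1 := by
      apply ContinuousOn.intervalIntegrable
      rw [Set.uIcc_of_le hl11]
      apply ContinuousOn.div continuousOn_const (by fun_prop)
      intro x hx
      have : 1 < x := lt_of_lt_of_le hl hx.1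
      intro hc; rw [sub_eq_zero] at hc; linarith
    have hint2 : IntervalIntegrable (fun _ : ℝ => (4:ℝ)) MeasureTheory.volume l 1.1 :=
      intervalIntegrable_const
    have h2 : (∫ x in Set.Ioc l (1.1:ℝ), (1/(x-1) - 4))
        = Real.log ((1.1-1)/(l-1)) - 4*(1.1-l) := by
      rw [← intervalIntegral.integral_of_le hl11,
        intervalIntegral.integral_sub hint1 hint2,
        integral_one_div_shift hl hl11, intervalIntegral.integral_const, smul_eq_mul]
      ring
    calc Real.log ((1.1-1)/(l-1)) - 4*(1.1-l) = ∫ x in Set.Ioc l (1.1:ℝ), (1/(x-1) - 4) := h2.symm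
      _ ≤ (∫ x in Set.Ioc l 1.1, fB θ d x) := h1
  have hlog : Real.log ((1.1-1)/(l-1)) = Real.log 0.1 - Real.log (l-1) := by
    rw [show ((1.1:ℝ)-1) = 0.1 by norm_num, Real.log_div (by norm_num) (by intro h; nlinarith [h])]
  have hlog10 : -Real.log 0.1 ≤ 9 := by
    rw [show (0.1:ℝ) = 10⁻¹ by norm_num, Real.log_inv, neg_neg]
    have := Real.log_le_sub_one_of_pos (show (0:ℝ) < 10 by norm_num)
    linarith
  rw [hsplit]
  rw [hlog] at hmain
  have h4 : 4*(1.1 - l) ≤ 0.4 := by norm_num; linarith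
  norm_num at *
  linarith

end ThetaD

theorem nk_sum_growth_bounds_aux
    (θ d : ℝ → ℝ)
    (hθ : ∀ x : ℝ, 1 < x → θ x ∈ Set.Ioo (0 : ℝ) 1 ∧ 1 - θ x = Real.exp (-(x * θ x)))
    (hd : ∀ c : ℝ, 1 < c →
      d c ∈ Set.Ioo (0 : ℝ) 1 ∧ c * Real.exp (-c) = d c * Real.exp (-(d c)))
    (n : ℕ → ℝ → ℝ)
    (hn0 : ∀ l : ℝ, n 0 l = 1)
    (hnsucc : ∀ k : ℕ, ∀ l : ℝ, 1 < l →
      n (k + 1) l = ∫ x in Set.Ioi l, ((1 - θ x) / (1 - d x)) * n k x) :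
    ∃ c C L₀ : ℝ, 0 < c ∧ 0 < C ∧ 1 < L₀ ∧
      ∀ l : ℝ, 1 < l → l < L₀ →
        c / ((l - 1) * Real.log (1 / (l - 1))) ≤ ∑' k : ℕ, n k l ∧
        ∑' k : ℕ, n k l ≤ Real.exp (C * Real.sqrt (Real.log (1 / (l - 1)))) / (l - 1) := by
  refine ⟨Real.exp (-10), 29, 17/16, Real.exp_pos _, by norm_num, by norm_num, ?_⟩
  intro l hl hL0
  have hl2 : l ≤ 17/16 := hL0.le
  have hlpos : 0 < l - 1 := by linarith
  have hsum := n_tsum hθ hd hn0 hnsucc hl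
  have hup := FF_upper hθ hd hl hl2
  have hlo := FF_lower hθ hd hl hl2
  have hLeq : Real.log (1/(l-1)) = -Real.log (l-1) := by rw [one_div, Real.log_inv]
  have hL1 : 1 ≤ Real.log (1/(l-1)) := by
    rw [hLeq, le_neg, Real.log_le_iff_le_exp hlpos]
    have he := Real.exp_one_lt_d9
    have h16 : (16:ℝ)⁻¹ ≤ (Real.exp 1)⁻¹ := by
      apply inv_anti₀ (Real.exp_pos 1)
      linarith
    rw [Real.exp_neg]
    have : l - 1 ≤ (16:ℝ)⁻¹ := by norm_num; linarith
    linarith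
  have hLpos : 0 < Real.log (1/(l-1)) := by linarith
  constructor
  · rw [hsum]
    have h1 : Real.exp (-10) / ((l-1) * Real.log (1/(l-1))) ≤ Real.exp (-10) / (l-1) := by
      apply div_le_div_of_nonneg_left (Real.exp_pos _).le hlpos
      nlinarith
    have heq : Real.exp (-Real.log (l-1) - 10) = Real.exp (-10) / (l-1) := by
      rw [show -Real.log (l-1) - 10 = (-10) + (-Real.log (l-1)) by ring, Real.exp_add,
        show Real.exp (-Real.log (l-1)) = (l-1)⁻¹ by rw [Real.exp_neg, Real.exp_log hlpos],
        div_eq_mul_inv]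
    have h2 : Real.exp (-10) / (l-1) ≤ Real.exp (FF θ d l) := by
      rw [← heq]
      exact Real.exp_le_exp.2 hlo
    exact le_trans h1 h2
  · rw [hsum]
    have heq : Real.exp (-Real.log (l-1) + 29) = Real.exp 29 / (l-1) := by
      rw [show -Real.log (l-1) + 29 = (29:ℝ) + (-Real.log (l-1)) by ring, Real.exp_add,
        show Real.exp (-Real.log (l-1)) = (l-1)⁻¹ by rw [Real.exp_neg, Real.exp_log hlpos],
        div_eq_mul_inv]
    have h3 : Real.exp (FF θ d l) ≤ Real.exp 29 / (l-1) := by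
      rw [← heq]
      exact Real.exp_le_exp.2 hup
    have hsq : 1 ≤ Real.sqrt (Real.log (1/(l-1))) :=
      Real.le_sqrt_of_sq_le (by nlinarith)
    have h4 : Real.exp 29 / (l-1) ≤ Real.exp (29 * Real.sqrt (Real.log (1/(l-1)))) / (l-1) := by
      gcongr
      nlinarith
    exact le_trans h3 h4

end NKGrowth

/-- Proposition 7.3 of the paper: there are constants `c, C > 0` and `λ₀ > 1`
such that for all `1 < λ < λ₀`,
`c/((λ−1)·log(1/(λ−1))) ≤ ∑_{k≥0} n_k(λ) ≤ exp(C·√(log(1/(λ−1))))/(λ−1)`,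
where `n_0(λ) = 1` and `n_{k+1}(λ) = ∫_λ^∞ ((1 − θ(x))/(1 − x*))·n_k(x) dx`. -/
theorem nk_sum_growth_bounds
    (θ d : ℝ → ℝ)
    (hθ : ∀ x : ℝ, 1 < x → θ x ∈ Set.Ioo (0 : ℝ) 1 ∧ 1 - θ x = Real.exp (-(x * θ x)))
    (hd : ∀ c : ℝ, 1 < c →
      d c ∈ Set.Ioo (0 : ℝ) 1 ∧ c * Real.exp (-c) = d c * Real.exp (-(d c)))
    (n : ℕ → ℝ → ℝ)
    (hn0 : ∀ l : ℝ, n 0 l = 1)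
    (hnsucc : ∀ k : ℕ, ∀ l : ℝ, 1 < l →
      n (k + 1) l = ∫ x in Set.Ioi l, ((1 - θ x) / (1 - d x)) * n k x) :
    ∃ c C L₀ : ℝ, 0 < c ∧ 0 < C ∧ 1 < L₀ ∧
      ∀ l : ℝ, 1 < l → l < L₀ →
        c / ((l - 1) * Real.log (1 / (l - 1))) ≤ ∑' k : ℕ, n k l ∧
        ∑' k : ℕ, n k l ≤ Real.exp (C * Real.sqrt (Real.log (1 / (l - 1)))) / (l - 1) := by
  exact NKGrowth.nk_sum_growth_bounds_aux θ d hθ hd n hn0 hnsucc
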